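/- Assume ω := ∂₂Φ(0) ≠ 0 (so A(0) ≠ 0). Then |W(j)| → ∞ as j → 0 within Ω_r: for every M > 0 there is δ > 0 such that |W(j)| > M for all j ∈ Ω_r with |j| < δ. (The rotation number diverges when j approaches the focus-focus value.) -/

import Mathlib

open Real Complex Filter Topology

/-- First partial derivative (direction `1`) of a function on `ℂ ≃ ℝ²`. -/
noncomputable def pd1 (f : ℂ → ℝ) (z : ℂ) : ℝ := fderiv ℝ f z 1

/-- Second partial derivative (direction `i`) of a function on `ℂ ≃ ℝ²`. -/
noncomputable def pd2 (f : ℂ → ℝ) (z : ℂ) : ℝ := fderiv ℝ f z Complex.I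

/-- The slit punctured disc `Ω_r = {j : 0 < |j| < r, ζ ∉ (-∞,0]}`. -/
def slitDisc (r : ℝ) : Set ℂ :=
  {z : ℂ | 0 < ‖z‖ ∧ ‖z‖ < r ∧ ¬(z.re ≤ 0 ∧ z.im = 0)}

/-- The period `τ₁(j) = σ₁(j) - ln|j|`. -/
noncomputable def tau1 (σ₁ : ℂ → ℝ) (z : ℂ) : ℝ := σ₁ z - Real.log ‖z‖

/-- The period `τ₂(j) = σ₂(j) + arg ζ`. -/
noncomputable def tau2 (σ₂ : ℂ → ℝ) (z : ℂ) : ℝ := σ₂ z + Complex.arg z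

/-- `A(j) = ∂₂Φ(j) / ∂₁Φ(j)`. -/
noncomputable def Afun (Φ : ℂ → ℝ) (z : ℂ) : ℝ := pd2 Φ z / pd1 Φ z

/-- The rotation number `W(j) = (τ₁(j) A(j) - τ₂(j)) / (2π)`. -/
noncomputable def Wrot (σ₁ σ₂ Φ : ℂ → ℝ) (z : ℂ) : ℝ :=
  (tau1 σ₁ z * Afun Φ z - tau2 σ₂ z) / (2 * Real.pi)

/-- if `ω ≠ 0` then `|W(j)| → ∞` as `j → 0` within `Ω_r`. -/
theorem rotation_number_diverges (r : ℝ) (hr : 0 < r) (σ₁ σ₂ Φ : ℂ → ℝ) (U : Set ℂ)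
    (hUopen : IsOpen U) (hU0 : (0 : ℂ) ∈ U)
    (hσ₁ : ContDiffOn ℝ (⊤ : ℕ∞) σ₁ U) (hσ₂ : ContDiffOn ℝ (⊤ : ℕ∞) σ₂ U)
    (hΦ : ContDiffOn ℝ (⊤ : ℕ∞) Φ U)
    (hΦ1 : ∀ z ∈ U, pd1 Φ z ≠ 0)
    (hω : pd2 Φ 0 ≠ 0)
    (hsub : slitDisc r ⊆ U) :
    ∀ M > 0, ∃ δ > 0, ∀ j ∈ slitDisc r, ‖j‖ < δ →
      M < |Wrot σ₁ σ₂ Φ j| := by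

  intro M hM
  have hUn : U ∈ 𝓝 (0:ℂ) := hUopen.mem_nhds hU0
  have hfd : ContinuousOn (fderiv ℝ Φ) U :=
    hΦ.continuousOn_fderiv_of_isOpen hUopen (by simp)
  have hpd1c : ContinuousAt (pd1 Φ) 0 :=
    (hfd.clm_apply continuousOn_const).continuousAt hUn
  have hpd2c : ContinuousAt (pd2 Φ) 0 :=
    (hfd.clm_apply continuousOn_const).continuousAt hUn
  have hA : ContinuousAt (Afun Φ) 0 := hpd2c.div hpd1c (hΦ1 0 hU0)
  have hA0 : Afun Φ 0 ≠ 0 := div_ne_zero hω (hΦ1 0 hU0)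
  set c : ℝ := |Afun Φ 0| / 2 with hc_def
  have hc : 0 < c := by positivity
  obtain ⟨δA, hδA, hAball⟩ := Metric.continuousAt_iff.mp hA c hc
  have hσ1c : ContinuousAt σ₁ 0 := hσ₁.continuousOn.continuousAt hUn
  have hσ2c : ContinuousAt σ₂ 0 := hσ₂.continuousOn.continuousAt hUn
  obtain ⟨δ₁, hδ₁, h1ball⟩ := Metric.continuousAt_iff.mp hσ1c 1 one_pos
  obtain ⟨δ₂, hδ₂, h2ball⟩ := Metric.continuousAt_iff.mp hσ2c 1 one_pos
  set B₁ : ℝ := |σ₁ 0| + 1 with hB1_def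
  set B₂ : ℝ := |σ₂ 0| + 1 with hB2_def
  have hπ : (0:ℝ) < Real.pi := Real.pi_pos
  have hB2pos : 0 < B₂ := by positivity
  set T : ℝ := (2 * Real.pi * M + B₂ + Real.pi) / c with hT_def
  have hT : 0 < T := by
    apply div_pos _ hc
    positivity
  refine ⟨min (min δA (min δ₁ δ₂)) (Real.exp (-(B₁ + T + 1))), ?_, ?_⟩
  · exact lt_min (lt_min hδA (lt_min hδ₁ hδ₂)) (Real.exp_pos _)
  intro j hj hjδ
  have hj0 : 0 < ‖j‖ := hj.1
  have hjA : ‖j‖ < δA := lt_of_lt_of_le hjδ ((min_le_left _ _).trans (min_le_left _ _))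
  have hj1 : ‖j‖ < δ₁ := lt_of_lt_of_le hjδ
    ((min_le_left _ _).trans ((min_le_right _ _).trans (min_le_left _ _)))
  have hj2 : ‖j‖ < δ₂ := lt_of_lt_of_le hjδ
    ((min_le_left _ _).trans ((min_le_right _ _).trans (min_le_right _ _)))
  have hjE : ‖j‖ < Real.exp (-(B₁ + T + 1)) := lt_of_lt_of_le hjδ (min_le_right _ _)
  have hdist : dist j 0 = ‖j‖ := by simp [Complex.dist_eq]
  -- bound on A
  have hAj : c < |Afun Φ j| := by
    have h1 : dist (Afun Φ j) (Afun Φ 0) < c := hAball (by rw [hdist]; exact hjA)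
    have h2 : |Afun Φ 0| - |Afun Φ j| ≤ |Afun Φ 0 - Afun Φ j| :=
      abs_sub_abs_le_abs_sub _ _
    rw [Real.dist_eq, abs_sub_comm] at h1
    have : c = |Afun Φ 0| / 2 := hc_def
    linarith
  -- bounds on σ₁ σ₂
  have hσ1j : |σ₁ j| < B₁ := by
    have h1 : dist (σ₁ j) (σ₁ 0) < 1 := h1ball (by rw [hdist]; exact hj1)
    rw [Real.dist_eq] at h1
    have h2 : |σ₁ j| - |σ₁ 0| ≤ |σ₁ j - σ₁ 0| := abs_sub_abs_le_abs_sub _ _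
    rw [hB1_def]; linarith
  have hσ2j : |σ₂ j| < B₂ := by
    have h1 : dist (σ₂ j) (σ₂ 0) < 1 := h2ball (by rw [hdist]; exact hj2)
    rw [Real.dist_eq] at h1
    have h2 : |σ₂ j| - |σ₂ 0| ≤ |σ₂ j - σ₂ 0| := abs_sub_abs_le_abs_sub _ _
    rw [hB2_def]; linarith
  -- log bound
  have hlog : Real.log (‖j‖) < -(B₁ + T + 1) := by
    have := Real.log_lt_log hj0 hjE
    rwa [Real.log_exp] at this
  -- tau1 bound
  have htau1 : T + 1 < tau1 σ₁ j := by
    have : -B₁ ≤ σ₁ j := by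
      have := abs_le.mp hσ1j.le
      linarith [this.1]
    rw [tau1]
    linarith
  have htau1' : 0 < tau1 σ₁ j := by linarith
  -- tau2 bound
  have htau2 : |tau2 σ₂ j| ≤ B₂ + Real.pi := by
    rw [tau2]
    calc |σ₂ j + Complex.arg j| ≤ |σ₂ j| + |Complex.arg j| := abs_add_le _ _
      _ ≤ B₂ + Real.pi := add_le_add hσ2j.le (Complex.abs_arg_le_pi j)
  -- main product bound
  have hprod : T * c < tau1 σ₁ j * |Afun Φ j| := by
    calc T * c < tau1 σ₁ j * c := by
          exact mul_lt_mul_of_pos_right (by linarith) hc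
      _ < tau1 σ₁ j * |Afun Φ j| := by
          exact mul_lt_mul_of_pos_left hAj htau1'
  have hTc : T * c = 2 * Real.pi * M + B₂ + Real.pi := by
    rw [hT_def, div_mul_cancel₀ _ (ne_of_gt hc)]
  have hnum : 2 * Real.pi * M < |tau1 σ₁ j * Afun Φ j - tau2 σ₂ j| := by
    have h1 : |tau1 σ₁ j * Afun Φ j| - |tau2 σ₂ j| ≤ |tau1 σ₁ j * Afun Φ j - tau2 σ₂ j| :=
      abs_sub_abs_le_abs_sub _ _
    have h2 : |tau1 σ₁ j * Afun Φ j| = tau1 σ₁ j * |Afun Φ j| := by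
      rw [abs_mul, abs_of_pos htau1']
    linarith
  rw [Wrot, abs_div, abs_of_pos (by positivity : (0:ℝ) < 2 * Real.pi),
    lt_div_iff₀ (by positivity : (0:ℝ) < 2 * Real.pi)]
  calc M * (2 * Real.pi) = 2 * Real.pi * M := by ring
    _ < _ := hnum
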